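/- Let b be a prime, m ≥ 1, k ∈ {1,…,m−1}, and let μ be the map of an NLT net with coefficients c_{i,j} (c_{i,i} ≢ 0 mod b). Let A ⊆ {0,1,…,b^m−1} be any set of b^k consecutive integers. Then for every s ∈ {0,1,…,b^k−1} there is exactly one n ∈ A with s/b^k ≤ μ(n) ≤ s/b^k + 1/b^k − 1/b^m; in particular, {μ(n) : n ∈ A} = {s/b^k + ζ_s : s = 0,…,b^k−1} with 0 ≤ ζ_s ≤ b^{−k} − b^{−m} for all s. -/

import Mathlib

/-- The `i`-th digit (1-based) of `n` in base `b`, with the convention that the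
`0`-th digit is `0`. -/
def nthDigit (b n i : ℕ) : ℕ := if i = 0 then 0 else n / b ^ (i - 1) % b
/-- The second-coordinate map `μ` of an NLT net with coefficient matrix `c`:
`μ(n) = Σ_{i=1}^m ((c_{i,1}e₁ + ⋯ + c_{i,i}e_i) mod b)/b^i`. -/
noncomputable def nltMap (b m : ℕ) (c : ℕ → ℕ → ℕ) (n : ℕ) : ℝ :=
  ∑ i ∈ Finset.Icc 1 m,
    (((∑ j ∈ Finset.Icc 1 i, c i j * nthDigit b n j) % b : ℕ) : ℝ) / (b : ℝ) ^ i

/-! The integer `⌊b ^ k μ(n)⌋` is the base-`b` numeral formed by the first `k` digits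
`y₁, …, y_k` of `μ(n)`, and `μ(n)` lies in the `s`-th interval iff this numeral is `s`.
Since `y_i ≡ c_{i,1} e₁ + ⋯ + c_{i,i} e_i (mod b)` is a lower-triangular system with
invertible diagonal over the field `ZMod b`, the numeral determines `e₁, …, e_k`, i.e.
`n mod b ^ k`. On `b ^ k` consecutive integers it is therefore injective, hence a bijection
onto `{0, …, b ^ k - 1}`. -/

open Finset

def ofDigitsMSB (b : ℕ) (d : ℕ → ℕ) : ℕ → ℕ
  | 0 => 0
  | t + 1 => ofDigitsMSB b d t * b + d (t + 1)

section ofDigitsMSB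

variable {b : ℕ} {d : ℕ → ℕ}

theorem ofDigitsMSB_lt {t : ℕ} (hd : ∀ i ∈ Icc 1 t, d i < b) : ofDigitsMSB b d t < b ^ t := by
  induction t with
  | zero => simp [ofDigitsMSB]
  | succ t ih =>
    have hlt := ih fun i hi => hd i (Icc_subset_Icc_right t.le_succ hi)
    have hlast := hd (t + 1) (by simp)
    calc ofDigitsMSB b d t * b + d (t + 1) < (ofDigitsMSB b d t + 1) * b := by linarith
      _ ≤ b ^ (t + 1) := by rw [pow_succ]; exact Nat.mul_le_mul_right _ hlt

theorem ofDigitsMSB_div_pow {k t : ℕ} (hkt : k ≤ t) (hd : ∀ i, k < i → i ≤ t → d i < b) :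
    ofDigitsMSB b d t / b ^ (t - k) = ofDigitsMSB b d k := by
  induction t, hkt using Nat.le_induction with
  | base => simp
  | succ t hkt ih =>
    have hlast := hd (t + 1) (by omega) le_rfl
    rw [Nat.sub_add_comm hkt, pow_succ', ← Nat.div_div_eq_div_mul, ofDigitsMSB, mul_comm,
      Nat.mul_add_div (by omega), Nat.div_eq_of_lt hlast, add_zero]
    exact ih fun i hki hit => hd i hki (by omega)

theorem ofDigitsMSB_div_pow_mod {i t : ℕ} (hd : ∀ j ∈ Icc 1 t, d j < b) (hi : i ∈ Icc 1 t) :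
    ofDigitsMSB b d t / b ^ (t - i) % b = d i := by
  obtain ⟨hi1, hit⟩ := mem_Icc.1 hi
  obtain ⟨i, rfl⟩ : ∃ i', i = i' + 1 := ⟨i - 1, by omega⟩
  rw [ofDigitsMSB_div_pow hit fun j hij hjt => hd j (mem_Icc.2 ⟨by omega, hjt⟩), ofDigitsMSB,
    Nat.mul_add_mod_self_right, Nat.mod_eq_of_lt (hd _ hi)]

theorem eq_of_ofDigitsMSB_eq {d' : ℕ → ℕ} {t : ℕ} (hd : ∀ i ∈ Icc 1 t, d i < b)
    (hd' : ∀ i ∈ Icc 1 t, d' i < b) (h : ofDigitsMSB b d t = ofDigitsMSB b d' t) :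
    ∀ i ∈ Icc 1 t, d i = d' i := fun i hi => by
  rw [← ofDigitsMSB_div_pow_mod hd hi, h, ofDigitsMSB_div_pow_mod hd' hi]

end ofDigitsMSB

theorem eq_of_lowerTriangular_sum_eq {R : Type*} [Ring R] [NoZeroDivisors R] {c : ℕ → ℕ → R}
    {x y : ℕ → R} {k : ℕ} (hdiag : ∀ i ∈ Icc 1 k, c i i ≠ 0)
    (h : ∀ i ∈ Icc 1 k, ∑ j ∈ Icc 1 i, c i j * x j = ∑ j ∈ Icc 1 i, c i j * y j) :
    ∀ i ∈ Icc 1 k, x i = y i := by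
  induction k with
  | zero => simp
  | succ k ih =>
    have hlow : ∀ i ∈ Icc 1 k, x i = y i :=
      ih (fun i hi => hdiag i (Icc_subset_Icc_right k.le_succ hi))
        (fun i hi => h i (Icc_subset_Icc_right k.le_succ hi))
    intro i hi
    rcases (mem_Icc.1 hi).2.lt_or_eq with hik | rfl
    · exact hlow i (mem_Icc.2 ⟨(mem_Icc.1 hi).1, by omega⟩)
    have hrow := h (k + 1) hi
    rw [sum_Icc_succ_top (by omega), sum_Icc_succ_top (by omega),
      sum_congr rfl fun j hj => by rw [hlow j hj]] at hrow
    exact mul_left_cancel₀ (hdiag _ hi) (add_left_cancel hrow)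

theorem mod_pow_eq_of_nthDigit_eq {b n n' k : ℕ}
    (h : ∀ j ∈ Icc 1 k, nthDigit b n j = nthDigit b n' j) : n % b ^ k = n' % b ^ k := by
  induction k with
  | zero => rw [pow_zero, Nat.mod_one, Nat.mod_one]
  | succ k ih =>
    have hlast := h (k + 1) (by simp)
    simp only [nthDigit, Nat.add_sub_cancel, if_neg k.succ_ne_zero] at hlast
    rw [Nat.mod_pow_succ, Nat.mod_pow_succ, hlast,
      ih fun j hj => h j (Icc_subset_Icc_right k.le_succ hj)]

def nltDigit (b : ℕ) (c : ℕ → ℕ → ℕ) (n i : ℕ) : ℕ :=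
  (∑ j ∈ Icc 1 i, c i j * nthDigit b n j) % b

/-- The integer `⌊b ^ k * μ(n)⌋`. -/
def nltPrefix (b : ℕ) (c : ℕ → ℕ → ℕ) (k n : ℕ) : ℕ := ofDigitsMSB b (nltDigit b c n) k

section nltPrefix

variable {b : ℕ} {c : ℕ → ℕ → ℕ}

theorem nltPrefix_lt (hb : 0 < b) (k n : ℕ) : nltPrefix b c k n < b ^ k :=
  ofDigitsMSB_lt fun _ _ => Nat.mod_lt _ hb

theorem nltMap_eq_nltPrefix_div (hb : b ≠ 0) (m n : ℕ) :
    nltMap b m c n = nltPrefix b c m n / (b : ℝ) ^ m := by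
  induction m with
  | zero => simp [nltMap, nltPrefix, ofDigitsMSB]
  | succ m ih =>
    rw [nltMap, sum_Icc_succ_top (by omega), ← nltMap, ih]
    simp only [nltPrefix, ofDigitsMSB, nltDigit]
    push_cast
    field_simp
    ring

theorem nltPrefix_div_pow (hb : 0 < b) {k m : ℕ} (hk : k ≤ m) (n : ℕ) :
    nltPrefix b c m n / b ^ (m - k) = nltPrefix b c k n :=
  ofDigitsMSB_div_pow hk fun _ _ _ => Nat.mod_lt _ hb

theorem nltMap_mem_iff_nltPrefix_eq (hb : 0 < b) {k m : ℕ} (hk : k ≤ m) (n s : ℕ) :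
    ((s : ℝ) / (b : ℝ) ^ k ≤ nltMap b m c n ∧
      nltMap b m c n ≤ (s : ℝ) / (b : ℝ) ^ k + 1 / (b : ℝ) ^ k - 1 / (b : ℝ) ^ m) ↔
      nltPrefix b c k n = s := by
  set t := b ^ (m - k) with ht
  have htpos : 0 < t := by positivity
  have hbm : (b : ℝ) ^ m = (b : ℝ) ^ k * t := by
    rw [ht, Nat.cast_pow, ← pow_add, Nat.add_sub_cancel' hk]
  have hlow : (s : ℝ) / (b : ℝ) ^ k = ((s * t : ℕ) : ℝ) / (b : ℝ) ^ m := by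
    rw [hbm]; push_cast; field_simp
  have hupp : (s : ℝ) / (b : ℝ) ^ k + 1 / (b : ℝ) ^ k - 1 / (b : ℝ) ^ m =
      ((s * t + t - 1 : ℕ) : ℝ) / (b : ℝ) ^ m := by
    rw [Nat.cast_sub (by omega), hbm]; push_cast; field_simp
  rw [← nltPrefix_div_pow hb hk, Nat.div_eq_iff htpos,
    nltMap_eq_nltPrefix_div hb.ne', hupp, hlow, div_le_div_iff_of_pos_right (by positivity),
    div_le_div_iff_of_pos_right (by positivity), Nat.cast_le, Nat.cast_le]

theorem mod_pow_eq_of_nltPrefix_eq (hb : b.Prime) {k : ℕ} (hdiag : ∀ i ∈ Icc 1 k, ¬ b ∣ c i i)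
    {n n' : ℕ} (h : nltPrefix b c k n = nltPrefix b c k n') : n % b ^ k = n' % b ^ k := by
  have := Fact.mk hb
  have hdig : ∀ i ∈ Icc 1 k, nltDigit b c n i = nltDigit b c n' i :=
    eq_of_ofDigitsMSB_eq (fun _ _ => Nat.mod_lt _ hb.pos) (fun _ _ => Nat.mod_lt _ hb.pos) h
  have hrows : ∀ i ∈ Icc 1 k,
      ∑ j ∈ Icc 1 i, (c i j : ZMod b) * (nthDigit b n j : ZMod b) =
        ∑ j ∈ Icc 1 i, (c i j : ZMod b) * (nthDigit b n' j : ZMod b) := fun i hi => by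
    exact_mod_cast (ZMod.natCast_eq_natCast_iff' _ _ b).2 (hdig i hi)
  have hcast := eq_of_lowerTriangular_sum_eq (c := fun i j => (c i j : ZMod b))
    (fun i hi => (ZMod.natCast_eq_zero_iff _ _).not.2 (hdiag i hi)) hrows
  refine mod_pow_eq_of_nthDigit_eq fun j hj => ?_
  have := (ZMod.natCast_eq_natCast_iff' _ _ b).1 (hcast j hj)
  have hj0 : j ≠ 0 := by have := (mem_Icc.1 hj).1; omega
  simpa only [nthDigit, if_neg hj0, Nat.mod_mod] using this

end nltPrefix

theorem existsUnique_mem_Ico_apply_eq {t : ℕ} (a : ℕ) {f : ℕ → ℕ} (hf : ∀ n, f n < t)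
    (hinj : ∀ n n', f n = f n' → n % t = n' % t) :
    ∀ s < t, ∃! n, n ∈ Ico a (a + t) ∧ f n = s := by
  have hinjOn : Set.InjOn f (Ico a (a + t)) := fun n hn n' hn' h =>
    Nat.mod_injOn_Ico a t hn hn' (hinj n n' h)
  have hsurj := surjOn_of_injOn_of_card_le f (t := range t)
    (fun n _ => mem_range.2 (hf n)) hinjOn (by simp)
  intro s hs
  obtain ⟨n, hn, rfl⟩ := hsurj (mem_range.2 hs)
  exact ⟨n, ⟨hn, rfl⟩, fun n' hn' => hinjOn hn'.1 hn hn'.2⟩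

theorem nltMap_equidistributed (b m k : ℕ) (hb : Nat.Prime b)
    (hkm : k ≤ m - 1) (c : ℕ → ℕ → ℕ)
    (hc : ∀ i j, c i j < b) (hdiag : ∀ i, 1 ≤ i → i ≤ m → c i i ≠ 0)
    (a : ℕ) :
    ∀ s < b ^ k, ∃! n : ℕ, n ∈ Finset.Ico a (a + b ^ k) ∧
      (s : ℝ) / (b : ℝ) ^ k ≤ nltMap b m c n ∧
      nltMap b m c n ≤ (s : ℝ) / (b : ℝ) ^ k + 1 / (b : ℝ) ^ k - 1 / (b : ℝ) ^ m := by
  have hdvd : ∀ i ∈ Icc 1 k, ¬ b ∣ c i i := fun i hi => by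
    obtain ⟨hi1, hik⟩ := mem_Icc.1 hi
    exact Nat.not_dvd_of_pos_of_lt (Nat.pos_of_ne_zero (hdiag i hi1 (by omega))) (hc i i)
  simpa only [nltMap_mem_iff_nltPrefix_eq hb.pos (by omega : k ≤ m)] using
    existsUnique_mem_Ico_apply_eq a (nltPrefix_lt hb.pos k)
      fun _ _ => mod_pow_eq_of_nltPrefix_eq hb hdvd
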